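/- Let X be a CAT(0) cube complex in which no hyperplane has extremal vertices. Then two vertices v, w of X are adjacent (joined by an edge) if and only if there is no vertex x ∉ {v, w} with W_v ∩ W_w ⊆ W_v ∩ W_x. -/

import Mathlib

open SimpleGraph

variable {V : Type*}

/-- A median graph: combinatorial model of (the 1-skeleton of) a CAT(0) cube complex. -/
def IsMedianGraph (G : SimpleGraph V) : Prop :=
  G.Connected ∧ ∀ x y z : V, ∃! m : V,
    G.dist x m + G.dist m y = G.dist x y ∧
    G.dist x m + G.dist m z = G.dist x z ∧
    G.dist y m + G.dist m z = G.dist y z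

/-- Djoković–Winkler relation on oriented edges of a median graph; hyperplanes are its classes. -/
def Theta (G : SimpleGraph V) (e f : V × V) : Prop :=
  G.dist e.1 f.1 + G.dist e.2 f.2 ≠ G.dist e.1 f.2 + G.dist e.2 f.1

/-- A hyperplane, identified with the set of (oriented) edges crossing it. -/
def IsHyperplane (G : SimpleGraph V) (h : Set (V × V)) : Prop :=
  ∃ e : V × V, G.Adj e.1 e.2 ∧ h = {f | G.Adj f.1 f.2 ∧ Theta G e f}

/-- The hyperplane `h` is adjacent to the vertex `v` (i.e. `v` lies in the carrier of `h`). -/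
def AdjTo (G : SimpleGraph V) (h : Set (V × V)) (v : V) : Prop :=
  ∃ e ∈ h, e.1 = v ∨ e.2 = v

/-- `Wv G v`: the set of hyperplanes adjacent to `v`. -/
def Wv (G : SimpleGraph V) (v : V) : Set (Set (V × V)) :=
  {h | IsHyperplane G h ∧ AdjTo G h v}

/-- Two hyperplanes are in contact if their carriers share a vertex. -/
def Contact (G : SimpleGraph V) (h h' : Set (V × V)) : Prop :=
  ∃ v : V, AdjTo G h v ∧ AdjTo G h' v

/-- Two hyperplanes are transverse if they cross a common square. -/
def Transverse (G : SimpleGraph V) (h h' : Set (V × V)) : Prop :=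
  ∃ a b c d : V, (a, b) ∈ h ∧ (c, d) ∈ h ∧ (a, c) ∈ h' ∧ (b, d) ∈ h' ∧
    G.Adj a b ∧ G.Adj c d ∧ G.Adj a c ∧ G.Adj b d

/-- A clique in the contact graph: a set of hyperplanes whose carriers pairwise intersect. -/
def IsContactClique (G : SimpleGraph V) (C : Set (Set (V × V))) : Prop :=
  (∀ h ∈ C, IsHyperplane G h) ∧ ∀ h ∈ C, ∀ h' ∈ C, h ≠ h' → Contact G h h'

/-- A maximal clique in the contact graph. -/
def IsMaxContactClique (G : SimpleGraph V) (C : Set (Set (V × V))) : Prop :=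
  IsContactClique G C ∧ ∀ C', IsContactClique G C' → C ⊆ C' → C' = C

/-- The link of `v` is a cone, i.e. `v` is an extremal vertex. -/
def LinkIsCone (G : SimpleGraph V) (v : V) : Prop :=
  ∃ h ∈ Wv G v, ∀ h' ∈ Wv G v, h' ≠ h → Transverse G h h'

/-- Uniform local finiteness. -/
def UnifLocFinite (G : SimpleGraph V) : Prop :=
  ∃ N : ℕ, ∀ v : V, (G.neighborSet v).Finite ∧ (G.neighborSet v).ncard ≤ N

abbrev Hyp (G : SimpleGraph V) := {h : Set (V × V) // IsHyperplane G h}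

/-- The contact graph `𝒞(X)`. -/
def contactGraph (G : SimpleGraph V) : SimpleGraph (Hyp G) where
  Adj h h' := h ≠ h' ∧ Contact G h.1 h'.1
  symm := by
    constructor
    rintro h h' ⟨hne, v, hv, hv'⟩
    exact ⟨hne.symm, v, hv', hv⟩
  loopless := by constructor; rintro h ⟨hne, -⟩; exact hne rfl

/-- `Ical G w` = I(w): the hyperplanes whose carrier contains the carrier of `w`,
i.e. the intersection of the sets `Wv G v` over all vertices `v` adjacent to `w`. -/
def Ical (G : SimpleGraph V) (w : Set (V × V)) : Set (Set (V × V)) :=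
  {u | IsHyperplane G u ∧ ∀ v : V, AdjTo G w v → AdjTo G u v}

/-- `Ical0 G w` = I⁰(w): the hyperplanes with the same carrier as `w`. -/
def Ical0 (G : SimpleGraph V) (w : Set (V × V)) : Set (Set (V × V)) :=
  {u | u ∈ Ical G w ∧ w ∈ Ical G u}

/-- The action of a cubical automorphism on sets of edges (e.g. hyperplanes). -/
def hmap (G : SimpleGraph V) (φ : G ≃g G) (h : Set (V × V)) : Set (V × V) :=
  (fun e : V × V => (φ e.1, φ e.2)) '' h

/-- `π` is the vertex permutation induced by the contact-graph automorphism `ψ` via the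
correspondence between vertices and maximal cliques (`ρ(ψ) = π`). -/
def InducesPerm (G : SimpleGraph V) (ψ : contactGraph G ≃g contactGraph G)
    (π : Equiv.Perm V) : Prop :=
  ∀ (v : V) (h : Hyp G), h.1 ∈ Wv G v ↔ (ψ h).1 ∈ Wv G (π v)

/-- The hyperplane `u` is adjacent, inside the cube complex structure of a hyperplane `w`,
to the vertex of `w` given by the edge `e ∈ w`: `u` crosses a square containing `e`. -/
def HypAdjEdge (G : SimpleGraph V) (u : Set (V × V)) (e : V × V) : Prop :=
  ∃ c d : V, (e.1, c) ∈ u ∧ (e.2, d) ∈ u ∧ G.Adj c d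

/-- The link, in the cube complex structure of hyperplane `w`, of the vertex given by
`e ∈ w` is a cone (i.e. this vertex of `w` is extremal). -/
def HypLinkCone (G : SimpleGraph V) (w : Set (V × V)) (e : V × V) : Prop :=
  ∃ u, IsHyperplane G u ∧ u ≠ w ∧ HypAdjEdge G u e ∧
    ∀ u', IsHyperplane G u' → u' ≠ w → HypAdjEdge G u' e → u' ≠ u → Transverse G u u'

/-- No hyperplane of `X` has an extremal vertex. -/
def NoHypExtremalVertex (G : SimpleGraph V) : Prop :=
  ∀ w, IsHyperplane G w → ∀ e ∈ w, ¬ HypLinkCone G w e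

/-! In a median graph an edge `ab` splits the vertices into those closer to `a` and those
closer to `b`, and its hyperplane consists of the edges joining the two sides. Climbing
towards `ab` along ladders built from the quadrangle condition shows that every edge of the
hyperplane induces the same splitting, which gives convexity of hyperplane carriers.

If `v, w` are not adjacent, convexity puts the neighbour of `v` on a geodesic to `w` into
the carrier of every hyperplane adjacent to both. If `v w` is an edge and `x ∉ {v, w}`, on
the side of `v`, is adjacent to all these hyperplanes, then by convexity so is the neighbour
`y` of `v` towards `x`. Every hyperplane adjacent to the vertex `(v, w)` of the hyperplane
of `v w` is then adjacent to `y`, and the edge at `y` crossing it spans a square with `v y`.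
So the hyperplane of `v y` is a cone point of the link of that vertex, which is extremal. -/

lemma SimpleGraph.Connected.exists_adj_dist_eq {G : SimpleGraph V} (hc : G.Connected)
    {a b : V} {n : ℕ} (h : G.dist a b = n + 1) : ∃ c, G.Adj a c ∧ G.dist c b = n := by
  obtain ⟨p, hp⟩ := hc.exists_walk_length_eq_dist a b
  rw [h] at hp
  cases p with
  | nil => simp at hp
  | @cons _ c _ hac q =>
    refine ⟨c, hac, le_antisymm ?_ ?_⟩
    · have hq : q.length = n := by simpa using hp
      exact hq ▸ dist_le q
    · have := hc.dist_triangle (u := a) (v := c) (w := b)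
      rw [dist_eq_one_iff_adj.2 hac] at this
      omega

def hyperplane (G : SimpleGraph V) (a b : V) : Set (V × V) :=
  {f | G.Adj f.1 f.2 ∧ Theta G (a, b) f}

section Hyperplane

variable {G : SimpleGraph V} {a b v : V}

lemma isHyperplane_hyperplane (hab : G.Adj a b) : IsHyperplane G (hyperplane G a b) :=
  ⟨(a, b), hab, rfl⟩

lemma mem_hyperplane_self (hab : G.Adj a b) : (a, b) ∈ hyperplane G a b := by
  refine ⟨hab, ?_⟩
  simp only [Theta, dist_self, dist_comm (u := b), dist_eq_one_iff_adj.2 hab]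
  omega

lemma hyperplane_comm : hyperplane G a b = hyperplane G b a := by
  ext ⟨p, q⟩
  constructor <;> rintro ⟨hpq, hθ⟩ <;> exact ⟨hpq, by simp only [Theta] at hθ ⊢; omega⟩

lemma adjTo_hyperplane_iff :
    AdjTo G (hyperplane G a b) v ↔ ∃ v', (v, v') ∈ hyperplane G a b := by
  constructor
  · rintro ⟨⟨p, q⟩, hpq, rfl | rfl⟩
    · exact ⟨q, hpq⟩
    · exact ⟨p, hpq.1.symm, Ne.symm hpq.2⟩
  · rintro ⟨v', hv'⟩
    exact ⟨_, hv', Or.inl rfl⟩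

end Hyperplane

structure Crossing (G : SimpleGraph V) (a b u z : V) : Prop where
  adj_ab : G.Adj a b
  adj_uz : G.Adj u z
  near : G.dist u b = G.dist u a + 1
  far : G.dist z a = G.dist z b + 1

lemma Crossing.symm {G : SimpleGraph V} {a b u z : V} (h : Crossing G a b u z) :
    Crossing G b a z u :=
  ⟨h.adj_ab.symm, h.adj_uz.symm, h.far, h.near⟩

lemma Crossing.dist_eq {G : SimpleGraph V} {a b u z : V} (hc : G.Connected)
    (h : Crossing G a b u z) : G.dist u a = G.dist z b := by
  have := hc.dist_triangle (u := u) (v := z) (w := b)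
  have := hc.dist_triangle (u := z) (v := u) (w := a)
  have := dist_eq_one_iff_adj.2 h.adj_uz
  have := dist_eq_one_iff_adj.2 h.adj_uz.symm
  have := h.near
  have := h.far
  omega

namespace IsMedianGraph

variable {G : SimpleGraph V} {a b c u v w x y z : V}

lemma dist_eq_add_one_or (hG : IsMedianGraph G) (hab : G.Adj a b) (y : V) :
    G.dist y b = G.dist y a + 1 ∨ G.dist y a = G.dist y b + 1 := by
  obtain ⟨m, ⟨hya, hyb, hab'⟩, -⟩ := hG.2 y a b
  have hab₁ := dist_eq_one_iff_adj.2 hab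
  have hba₁ := dist_eq_one_iff_adj.2 hab.symm
  rcases (by omega : G.dist a m = 0 ∨ G.dist m b = 0) with h | h
  · obtain rfl := hG.1.dist_eq_zero_iff.1 h
    omega
  · obtain rfl := hG.1.dist_eq_zero_iff.1 h
    omega

lemma dist_eq_two (hG : IsMedianGraph G) (hxy : G.Adj x y) (hyz : G.Adj y z) (hxz : x ≠ z) :
    G.dist x z = 2 := by
  have := hG.1.dist_eq_zero_iff.not.2 hxz
  have := dist_eq_one_iff_adj.2 hxy
  rcases hG.dist_eq_add_one_or hyz x with h | h <;> omega

lemma existsUnique_quadrangle (hG : IsMedianGraph G) {k : ℕ} (hxy : G.dist x y = 2)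
    (hzx : G.dist z x = k + 1) (hzy : G.dist z y = k + 1) :
    ∃! m, G.Adj x m ∧ G.Adj m y ∧ G.dist z m = k := by
  obtain ⟨m, ⟨h₁, h₂, h₃⟩, huniq⟩ := hG.2 x y z
  have := dist_comm (G := G) (u := x) (v := z)
  have := dist_comm (G := G) (u := y) (v := z)
  have := dist_comm (G := G) (u := m) (v := z)
  have := dist_comm (G := G) (u := y) (v := m)
  refine ⟨m, ⟨dist_eq_one_iff_adj.1 (by omega), dist_eq_one_iff_adj.1 (by omega), by omega⟩,
    fun m' ⟨hxm', hm'y, hzm'⟩ => huniq m' ?_⟩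
  have := dist_eq_one_iff_adj.2 hxm'
  have := dist_eq_one_iff_adj.2 hm'y
  have := dist_eq_one_iff_adj.2 hm'y.symm
  have := dist_comm (G := G) (u := m') (v := z)
  exact ⟨by omega, by omega, by omega⟩


lemma mem_hyperplane_iff (hG : IsMedianGraph G) (hab : G.Adj a b) {p q : V} :
    (p, q) ∈ hyperplane G a b ↔ G.Adj p q ∧
      ((G.dist p b = G.dist p a + 1 ∧ G.dist q a = G.dist q b + 1) ∨
        (G.dist p a = G.dist p b + 1 ∧ G.dist q b = G.dist q a + 1)) := by
  refine and_congr_right fun _ => ?_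
  change G.dist a p + G.dist b q ≠ G.dist a q + G.dist b p ↔ _
  rw [dist_comm (u := a), dist_comm (u := b), dist_comm (u := a), dist_comm (u := b)]
  rcases hG.dist_eq_add_one_or hab p with hp | hp <;>
    rcases hG.dist_eq_add_one_or hab q with hq | hq <;>
    constructor <;> intro h <;> omega

lemma exists_crossing_closer (hG : IsMedianGraph G) (h : Crossing G a b u z) {n : ℕ}
    (hn : G.dist u a = n + 1) :
    ∃ u' m', G.Adj u u' ∧ G.Adj z m' ∧ Crossing G a b u' m' ∧ G.dist u' a = n ∧
      G.dist u m' = 2 := by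
  obtain ⟨u', huu', hu'a⟩ := hG.1.exists_adj_dist_eq hn
  have hzb := h.dist_eq hG.1
  have := h.near
  have := h.far
  have hu'b : G.dist u' b = n + 1 := by
    have := hG.1.dist_triangle (u := u) (v := u') (w := b)
    have := dist_eq_one_iff_adj.2 huu'
    rcases hG.dist_eq_add_one_or h.adj_ab u' with h' | h' <;> omega
  have hu'z : G.dist u' z = 2 :=
    hG.dist_eq_two huu'.symm h.adj_uz (by rintro rfl; omega)
  obtain ⟨m', ⟨hu'm', hm'z, hbm'⟩, -⟩ := hG.existsUnique_quadrangle hu'z (z := b) (k := n)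
    (by rw [dist_comm]; omega) (by rw [dist_comm]; omega)
  rw [dist_comm] at hbm'
  have hm'a : G.dist m' a = G.dist m' b + 1 := by
    have := hG.1.dist_triangle (u := z) (v := m') (w := a)
    have := dist_eq_one_iff_adj.2 hm'z.symm
    rcases hG.dist_eq_add_one_or h.adj_ab m' with h' | h' <;> omega
  have hum' : G.dist u m' = 2 := hG.dist_eq_two h.adj_uz hm'z.symm (by rintro rfl; omega)
  exact ⟨u', m', huu', hm'z.symm, ⟨h.adj_ab, hu'm', by omega, hm'a⟩, hu'a, hum'⟩

lemma dist_eq_add_one_of_crossing (hG : IsMedianGraph G) (h : Crossing G a b u z)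
    (hy : G.dist y b = G.dist y a + 1) : G.dist y z = G.dist y u + 1 := by
  obtain ⟨n, hn⟩ : ∃ n, G.dist u a = n := ⟨_, rfl⟩
  induction n generalizing u z with
  | zero =>
    have hzb : G.dist z b = 0 := h.dist_eq hG.1 ▸ hn
    obtain rfl := hG.1.dist_eq_zero_iff.1 hn
    obtain rfl := hG.1.dist_eq_zero_iff.1 hzb
    exact hy
  | succ n ih =>
    obtain ⟨u', m', huu', hzm', h', hu'a, hum'⟩ := hG.exists_crossing_closer h hn
    have hym' := ih h' hu'a
    rcases hG.dist_eq_add_one_or h.adj_uz y with hyz | hyu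
    · exact hyz
    -- otherwise `z` and `u'` are two fourth vertices of the quadrangle `u, m'` seen from `y`
    have := hG.dist_eq_add_one_or huu' y
    have := hG.dist_eq_add_one_or hzm' y
    obtain ⟨k, hk⟩ : ∃ k, G.dist y z = k := ⟨_, rfl⟩
    have hzu' : z = u' := (hG.existsUnique_quadrangle hum' (by omega) (by omega)).unique
      ⟨h.adj_uz, hzm', hk⟩ ⟨huu', h'.adj_uz, by omega⟩
    subst hzu'
    have := h.far
    have := h'.near
    omega

lemma dist_eq_add_one_iff_of_crossing (hG : IsMedianGraph G) (h : Crossing G a b u z) (y : V) :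
    G.dist y b = G.dist y a + 1 ↔ G.dist y z = G.dist y u + 1 := by
  refine ⟨hG.dist_eq_add_one_of_crossing h, fun hy => ?_⟩
  rcases hG.dist_eq_add_one_or h.adj_ab y with hy' | hy'
  · exact hy'
  · have := hG.dist_eq_add_one_of_crossing h.symm hy'
    omega

lemma hyperplane_eq_of_crossing (hG : IsMedianGraph G) (h : Crossing G a b u z) :
    hyperplane G a b = hyperplane G u z := by
  ext ⟨p, q⟩
  rw [hG.mem_hyperplane_iff h.adj_ab, hG.mem_hyperplane_iff h.adj_uz,
    hG.dist_eq_add_one_iff_of_crossing h p, hG.dist_eq_add_one_iff_of_crossing h q,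
    hG.dist_eq_add_one_iff_of_crossing h.symm p, hG.dist_eq_add_one_iff_of_crossing h.symm q]

lemma hyperplane_eq_of_mem (hG : IsMedianGraph G) (hab : G.Adj a b)
    (huz : (u, z) ∈ hyperplane G a b) : hyperplane G a b = hyperplane G u z := by
  rcases (hG.mem_hyperplane_iff hab).1 huz with ⟨huz, ⟨hu, hz⟩ | ⟨hu, hz⟩⟩
  · exact hG.hyperplane_eq_of_crossing ⟨hab, huz, hu, hz⟩
  · rw [hG.hyperplane_eq_of_crossing ⟨hab, huz.symm, hz, hu⟩, hyperplane_comm]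

lemma eq_hyperplane_of_mem (hG : IsMedianGraph G) {h : Set (V × V)} (hh : IsHyperplane G h)
    (huz : (u, z) ∈ h) : h = hyperplane G u z := by
  obtain ⟨⟨a, b⟩, hab, rfl⟩ := hh
  exact hG.hyperplane_eq_of_mem hab huz

lemma adjTo_hyperplane_of_far (hG : IsMedianGraph G) (hab : G.Adj a b) (haz : G.Adj a z)
    (hz : G.dist z b = G.dist z a + 1) {W : V} (hW : G.dist W a = G.dist W b + 1)
    (hzW : G.dist z W + 1 = G.dist a W) : AdjTo G (hyperplane G a b) z := by
  rw [SimpleGraph.dist_comm (u := z), SimpleGraph.dist_comm (u := a)] at hzW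
  have := dist_eq_one_iff_adj.2 haz.symm
  have hzb : G.dist z b = 2 := by omega
  obtain ⟨k, hk⟩ := Nat.exists_eq_succ_of_ne_zero (n := G.dist W z) fun h₀ => by
    obtain rfl := hG.1.dist_eq_zero_iff.1 h₀
    omega
  obtain ⟨μ, ⟨hzμ, hμb, hWμ⟩, -⟩ := hG.existsUnique_quadrangle hzb hk (by omega)
  have hμa : G.dist μ a = G.dist μ b + 1 := by
    have := dist_eq_one_iff_adj.2 hμb
    rcases hG.dist_eq_add_one_or hab μ with h | h
    · obtain rfl := hG.1.dist_eq_zero_iff.1 (by omega : G.dist μ a = 0)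
      omega
    · exact h
  exact adjTo_hyperplane_iff.2
    ⟨μ, (hG.mem_hyperplane_iff hab).2 ⟨hzμ, Or.inl ⟨hz, hμa⟩⟩⟩

lemma adjTo_hyperplane_of_adj (hG : IsMedianGraph G) (hab : G.Adj a b) {q : V}
    (hq : AdjTo G (hyperplane G a b) q) (haz : G.Adj a z) (hz : G.dist z q + 1 = G.dist a q) :
    AdjTo G (hyperplane G a b) z := by
  have hab' : G.dist a b = G.dist a a + 1 := by rw [dist_self, dist_eq_one_iff_adj.2 hab]
  rcases hG.dist_eq_add_one_or hab z with hzn | hzf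
  · obtain ⟨q', hqq'⟩ := adjTo_hyperplane_iff.1 hq
    rcases (hG.mem_hyperplane_iff hab).1 hqq' with ⟨hqq'adj, ⟨hqn, hq'f⟩ | ⟨hqf, -⟩⟩
    · -- `a` and `z` lie on the same side of `(q, q')` as `q`, so `q'` is a far vertex to aim at
      have hcr : Crossing G a b q q' := ⟨hab, hqq'adj, hqn, hq'f⟩
      have := hG.dist_eq_add_one_of_crossing hcr hab'
      have := hG.dist_eq_add_one_of_crossing hcr hzn
      exact hG.adjTo_hyperplane_of_far hab haz hzn hq'f (by omega)
    · exact hG.adjTo_hyperplane_of_far hab haz hzn hqf hz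
  · exact ⟨(a, z), (hG.mem_hyperplane_iff hab).2 ⟨haz, Or.inl ⟨hab', hzf⟩⟩, Or.inr rfl⟩

/-- Hyperplane carriers are convex. -/
theorem adjTo_hyperplane_of_dist_add_dist_eq (hG : IsMedianGraph G) (hab : G.Adj a b) {p q : V}
    (hp : AdjTo G (hyperplane G a b) p) (hq : AdjTo G (hyperplane G a b) q)
    (hz : G.dist p z + G.dist z q = G.dist p q) : AdjTo G (hyperplane G a b) z := by
  obtain ⟨n, hn⟩ : ∃ n, G.dist p z = n := ⟨_, rfl⟩
  induction n generalizing p with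
  | zero =>
    obtain rfl := hG.1.dist_eq_zero_iff.1 hn
    exact hp
  | succ n ih =>
    obtain ⟨p₁, hpp₁, hp₁z⟩ := hG.1.exists_adj_dist_eq hn
    have := hG.1.dist_triangle (u := p₁) (v := z) (w := q)
    have := hG.1.dist_triangle (u := p) (v := p₁) (w := q)
    have := dist_eq_one_iff_adj.2 hpp₁
    obtain ⟨p', hpp'⟩ := adjTo_hyperplane_iff.1 hp
    have hp₁ : AdjTo G (hyperplane G a b) p₁ := by
      rw [hG.hyperplane_eq_of_mem hab hpp'] at hq ⊢
      exact hG.adjTo_hyperplane_of_adj hpp'.1 hq hpp₁ (by omega)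
    exact ih (p := p₁) hp₁ (by omega) hp₁z

lemma inter_Wv_subset_Wv (hG : IsMedianGraph G) (hx : G.dist v x + G.dist x w = G.dist v w) :
    Wv G v ∩ Wv G w ⊆ Wv G x := by
  rintro h ⟨⟨⟨⟨a, b⟩, hab, rfl⟩, hv⟩, -, hw⟩
  exact ⟨⟨_, hab, rfl⟩, hG.adjTo_hyperplane_of_dist_add_dist_eq hab hv hw hx⟩

lemma transverse_hyperplane_of_dist (hG : IsMedianGraph G) (hvx : G.Adj v x) (hvc : G.Adj v c)
    (hxc : x ≠ c) (hyx : G.dist y x + 1 = G.dist y v) (hyc : G.dist y c + 1 = G.dist y v) :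
    Transverse G (hyperplane G v x) (hyperplane G v c) := by
  have hxc₂ := hG.dist_eq_two hvx.symm hvc hxc
  have hcx₂ : G.dist c x = 2 := dist_comm (G := G) ▸ hxc₂
  have := dist_eq_one_iff_adj.2 hvx.symm
  have := dist_eq_one_iff_adj.2 hvc.symm
  obtain ⟨k, hk⟩ := Nat.exists_eq_succ_of_ne_zero (n := G.dist y x) fun h₀ => by
    obtain rfl := hG.1.dist_eq_zero_iff.1 h₀
    omega
  obtain ⟨m, ⟨hxm, hmc, hym⟩, -⟩ := hG.existsUnique_quadrangle hxc₂ hk (by omega)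
  have hmv := hG.dist_eq_two hxm.symm hvx.symm (by rintro rfl; omega)
  have := dist_eq_one_iff_adj.2 hxm.symm
  have := dist_eq_one_iff_adj.2 hmc
  refine ⟨v, x, c, m, mem_hyperplane_self hvx, ?_, mem_hyperplane_self hvc, ?_, hvx, hmc.symm,
    hvc, hxm⟩
  · exact (hG.mem_hyperplane_iff hvx).2 ⟨hmc.symm, Or.inl ⟨by omega, by omega⟩⟩
  · exact (hG.mem_hyperplane_iff hvc).2 ⟨hxm, Or.inl ⟨by omega, by omega⟩⟩

lemma transverse_hyperplane_of_adjTo (hG : IsMedianGraph G) (hvx : G.Adj v x) (hvc : G.Adj v c)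
    (hne : hyperplane G v c ≠ hyperplane G v x) (hx : AdjTo G (hyperplane G v c) x) :
    Transverse G (hyperplane G v x) (hyperplane G v c) := by
  have hxc : x ≠ c := by rintro rfl; exact hne rfl
  have := hG.dist_eq_two hvx.symm hvc hxc
  have := dist_eq_one_iff_adj.2 hvx.symm
  obtain ⟨p, hxp⟩ := adjTo_hyperplane_iff.1 hx
  obtain ⟨hxp', hpc⟩ : G.Adj x p ∧ G.dist p v = G.dist p c + 1 := by
    rcases (hG.mem_hyperplane_iff hvc).1 hxp with ⟨hadj, ⟨-, h⟩ | ⟨h, -⟩⟩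
    · exact ⟨hadj, h⟩
    · omega
  rcases hG.dist_eq_add_one_or hvx p with hpx | hpv
  · have hxp_mem : (x, p) ∈ hyperplane G v x :=
      (hG.mem_hyperplane_iff hvx).2 ⟨hxp', Or.inr ⟨by rw [dist_self]; omega, hpx⟩⟩
    exact absurd (by rw [hG.hyperplane_eq_of_mem hvc hxp, hG.hyperplane_eq_of_mem hvx hxp_mem]) hne
  · exact hG.transverse_hyperplane_of_dist (y := p) hvx hvc hxc (by omega) (by omega)

lemma hypLinkCone_of_inter_Wv_subset (hG : IsMedianGraph G) (hvw : G.Adj v w) (hvx : G.Adj v x)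
    (hxw : x ≠ w) (hsub : Wv G v ∩ Wv G w ⊆ Wv G x) :
    HypLinkCone G (hyperplane G v w) (v, w) := by
  have hxw₂ := hG.dist_eq_two hvx.symm hvw hxw
  have : G.dist w x = 2 := SimpleGraph.dist_comm.trans hxw₂
  have := dist_eq_one_iff_adj.2 hvx.symm
  have := dist_eq_one_iff_adj.2 hvw.symm
  have hH := isHyperplane_hyperplane hvw
  obtain ⟨x', hxx'⟩ := adjTo_hyperplane_iff.1 (hsub ⟨⟨hH, _, mem_hyperplane_self hvw,
    Or.inl rfl⟩, hH, _, mem_hyperplane_self hvw, Or.inr rfl⟩).2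
  obtain ⟨hxx'adj, hx'v⟩ : G.Adj x x' ∧ G.dist x' v = G.dist x' w + 1 := by
    rcases (hG.mem_hyperplane_iff hvw).1 hxx' with ⟨hadj, ⟨-, h⟩ | ⟨h, -⟩⟩
    · exact ⟨hadj, h⟩
    · omega
  have := hG.dist_eq_two hxx'adj.symm hvx.symm fun h => by
    rw [h, SimpleGraph.dist_self] at hx'v
    omega
  have := dist_eq_one_iff_adj.2 hxx'adj.symm
  have hwx' : G.Adj w x' := dist_eq_one_iff_adj.1 (by rw [SimpleGraph.dist_comm]; omega)
  have hne : hyperplane G v x ≠ hyperplane G v w := by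
    intro he
    have hvx_mem := mem_hyperplane_self hvx
    rw [he, hG.mem_hyperplane_iff hvw, SimpleGraph.dist_self] at hvx_mem
    omega
  refine ⟨hyperplane G v x, isHyperplane_hyperplane hvx, hne,
    ⟨x, x', mem_hyperplane_self hvx, ?_, hxx'adj⟩, ?_⟩
  · show (w, x') ∈ hyperplane G v x
    exact (hG.mem_hyperplane_iff hvx).2 ⟨hwx', Or.inl ⟨by omega, by omega⟩⟩
  · rintro u hu - ⟨c, d, hvc, hwd, -⟩ hne'
    have hux : AdjTo G u x := (hsub ⟨⟨hu, _, hvc, Or.inl rfl⟩, hu, _, hwd, Or.inl rfl⟩).2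
    obtain rfl := hG.eq_hyperplane_of_mem hu hvc
    exact hG.transverse_hyperplane_of_adjTo hvx hvc.1 hne' hux

lemma not_inter_Wv_subset_Wv_of_adj (hG : IsMedianGraph G) (hnoext : NoHypExtremalVertex G)
    (hvw : G.Adj v w) (hxv : x ≠ v) (hx : G.dist x w = G.dist x v + 1) :
    ¬ Wv G v ∩ Wv G w ⊆ Wv G x := by
  intro hsub
  obtain ⟨n, hn⟩ := Nat.exists_eq_succ_of_ne_zero (hG.1.dist_eq_zero_iff.not.2 hxv.symm)
  obtain ⟨y, hvy, hyx⟩ := hG.1.exists_adj_dist_eq hn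
  have := dist_eq_one_iff_adj.2 hvy
  have hyw : y ≠ w := by
    rintro rfl
    rw [SimpleGraph.dist_comm] at hyx hn
    omega
  have hy : G.dist v y + G.dist y x = G.dist v x := by omega
  have hsub' : Wv G v ∩ Wv G w ⊆ Wv G y :=
    fun _ hh => hG.inter_Wv_subset_Wv hy ⟨hh.1, hsub hh⟩
  exact hnoext _ (isHyperplane_hyperplane hvw) _ (mem_hyperplane_self hvw)
    (hG.hypLinkCone_of_inter_Wv_subset hvw hvy hyw hsub')

lemma exists_inter_Wv_subset_of_not_adj (hG : IsMedianGraph G) (hvw : v ≠ w)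
    (hnadj : ¬ G.Adj v w) :
    ∃ x, x ≠ v ∧ x ≠ w ∧ Wv G v ∩ Wv G w ⊆ Wv G v ∩ Wv G x := by
  have := hG.1.one_lt_dist_of_ne_of_not_adj hvw hnadj
  obtain ⟨x, hvx, hxw⟩ :=
    hG.1.exists_adj_dist_eq (a := v) (b := w) (n := G.dist v w - 1) (by omega)
  have := dist_eq_one_iff_adj.2 hvx
  have hx : G.dist v x + G.dist x w = G.dist v w := by omega
  refine ⟨x, hvx.ne', ?_, fun _ hh => ⟨hh.1, hG.inter_Wv_subset_Wv hx hh⟩⟩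
  rintro rfl
  rw [SimpleGraph.dist_self] at hxw
  omega

end IsMedianGraph

/-- if no hyperplane of `X` has an extremal vertex, then two distinct
vertices `v, w` are adjacent iff there is no vertex `x ∉ {v, w}` with
`Wv G v ∩ Wv G w ⊆ Wv G v ∩ Wv G x`. -/
theorem adjacency_from_Wv (G : SimpleGraph V) (hG : IsMedianGraph G)
    (hnoext : NoHypExtremalVertex G) (v w : V) (hvw : v ≠ w) :
    G.Adj v w ↔ ¬ ∃ x : V, x ≠ v ∧ x ≠ w ∧ Wv G v ∩ Wv G w ⊆ Wv G v ∩ Wv G x := by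
  constructor
  · rintro hadj ⟨x, hxv, hxw, hsub⟩
    have hsub' : Wv G v ∩ Wv G w ⊆ Wv G x := fun _ hh => (hsub hh).2
    rcases hG.dist_eq_add_one_or hadj x with hx | hx
    · exact hG.not_inter_Wv_subset_Wv_of_adj hnoext hadj hxv hx hsub'
    · exact hG.not_inter_Wv_subset_Wv_of_adj hnoext hadj.symm hxw hx
        (Set.inter_comm (Wv G v) _ ▸ hsub')
  · intro hno
    by_contra hnadj
    exact hno (hG.exists_inter_Wv_subset_of_not_adj hvw hnadj)
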